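/- Consider the pathwise minimax Q-learning system (Q_k) and the lower comparison system (Q_k^L) driven by the same noise sequence (w_k). If Q_0^L(s,a,b) ≤ Q_0(s,a,b) for all (s,a,b) ∈ S × A × B, then Q_k^L(s,a,b) ≤ Q_k(s,a,b) for all k ≥ 0 and all (s,a,b) ∈ S × A × B. -/

import Mathlib

/-!
The gap `Q k - QL k` satisfies a recursion: `(1 - α d)` times the old gap plus `α d γ` times the
`P`-average of `maxMin (Q k) - maxMin Q* - (QL k - Q*)(s', π*(s'), ν k (s', π*(s')))`.
Once `QL k ≤ Q k`, this average is nonnegative. `maxMin Q*` is attained at `π*(s')`. Since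
`ν k` minimises `QL k - Q*`, that difference is at most its value at a minimiser of
`b ↦ QL k (s', π*(s'), b)`; and `maxMin` is monotone. Induction on `k` then gives the claim.
-/

open Finset

namespace Finset

variable {ι : Type*} {s : Finset ι} (H : s.Nonempty) {u v : ι → ℝ}

theorem sub_le_inf'_sub_inf' {i₀ : ι} (hi₀ : ∀ i ∈ s, u i₀ - v i₀ ≤ u i - v i) :
    u i₀ - v i₀ ≤ s.inf' H u - s.inf' H v := by
  obtain ⟨i, hi, hu⟩ := s.exists_mem_eq_inf' H u
  have hv : s.inf' H v ≤ v i := inf'_le v hi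
  linarith [hi₀ i hi]

theorem sub_le_sup'_sub_sup' {i₀ : ι} (hi₀s : i₀ ∈ s) (hi₀ : ∀ i ∈ s, v i ≤ v i₀) :
    u i₀ - v i₀ ≤ s.sup' H u - s.sup' H v := by
  have hu : u i₀ ≤ s.sup' H u := le_sup' u hi₀s
  have hv : s.sup' H v ≤ v i₀ := sup'_le H v hi₀
  linarith

end Finset

section MaxMin

variable {S A B : Type*} [Fintype A] [Fintype B] [Nonempty A] [Nonempty B]

noncomputable def maxMin (Q : S × A × B → ℝ) (s : S) : ℝ :=
  univ.sup' univ_nonempty fun a => univ.inf' univ_nonempty fun b => Q (s, a, b)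

theorem maxMin_mono : Monotone (maxMin : (S × A × B → ℝ) → S → ℝ) :=
  fun _ _ hQ s => sup'_mono_fun fun a _ => inf'_mono_fun fun b _ => hQ (s, a, b)

theorem sub_le_maxMin_sub_maxMin {Q Q' : S × A × B → ℝ} {s : S} {a₀ : A} {b₀ : B}
    (ha₀ : ∀ a, (univ.inf' univ_nonempty fun b => Q' (s, a, b)) ≤
      univ.inf' univ_nonempty fun b => Q' (s, a₀, b))
    (hb₀ : ∀ b, Q (s, a₀, b₀) - Q' (s, a₀, b₀) ≤ Q (s, a₀, b) - Q' (s, a₀, b)) :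
    Q (s, a₀, b₀) - Q' (s, a₀, b₀) ≤ maxMin Q s - maxMin Q' s :=
  calc Q (s, a₀, b₀) - Q' (s, a₀, b₀)
      ≤ (univ.inf' univ_nonempty fun b => Q (s, a₀, b)) -
          univ.inf' univ_nonempty fun b => Q' (s, a₀, b) :=
        sub_le_inf'_sub_inf' (u := fun b => Q (s, a₀, b)) (v := fun b => Q' (s, a₀, b))
          univ_nonempty fun b _ => hb₀ b
    _ ≤ maxMin Q s - maxMin Q' s :=
        sub_le_sup'_sub_sup' (u := fun a => univ.inf' univ_nonempty fun b => Q (s, a, b))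
          univ_nonempty (mem_univ a₀) fun a _ => ha₀ a

end MaxMin

/-- One step of both recursions at a single entry, with `m`, `ms` and `c` standing for the
`P`-averages of `maxMin Q_k`, `maxMin Q*` and of the comparison system's bootstrap term. -/
theorem comparison_update_le {α d γ r w q l q₁ l₁ qs m ms c : ℝ}
    (hαd0 : 0 ≤ α * d) (hαd1 : α * d ≤ 1) (hγ : 0 ≤ γ)
    (hq₁ : q₁ = q + α * (d * (r + γ * m - q) + w))
    (hl₁ : l₁ - qs = (1 - α * d) * (l - qs) + α * d * γ * c + α * w)
    (hqs : qs = r + γ * ms) (hc : c ≤ m - ms) (hl : l ≤ q) :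
    l₁ ≤ q₁ := by
  have hgap : q₁ - l₁ = (1 - α * d) * (q - l) + α * d * γ * (m - ms - c) := by
    linear_combination hq₁ - hl₁ - α * d * hqs
  have hdecay : 0 ≤ (1 - α * d) * (q - l) := mul_nonneg (by linarith) (by linarith)
  have hbootstrap : 0 ≤ α * d * γ * (m - ms - c) := mul_nonneg (mul_nonneg hαd0 hγ) (by linarith)
  linarith

theorem lower_comparison_system_bounds_q_learning_general {S A B : Type*}
    [Fintype S] [Fintype A] [Fintype B] [Nonempty A] [Nonempty B]
    (P : S × A × B → S → ℝ) (hP0 : ∀ x s', 0 ≤ P x s')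
    (R : S × A × B → ℝ) (γ : ℝ) (hγ0 : 0 ≤ γ)
    (Qstar : S × A × B → ℝ)
    (hQstar : ∀ x : S × A × B, Qstar x = R x + γ * ∑ s' : S, P x s' *
      (Finset.univ.sup' Finset.univ_nonempty fun a' : A =>
        Finset.univ.inf' Finset.univ_nonempty fun b' : B => Qstar (s', a', b')))
    (α : ℝ) (hα : α ∈ Set.Ioo (0 : ℝ) 1)
    (d : S × A × B → ℝ) (hd : ∀ x, d x ∈ Set.Ioo (0 : ℝ) 1)
    (w : ℕ → S × A × B → ℝ)
    -- the pathwise minimax Q-learning system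
    (Q : ℕ → S × A × B → ℝ)
    (hQ : ∀ k (x : S × A × B), Q (k + 1) x = Q k x + α *
      (d x * (R x + γ * (∑ s' : S, P x s' *
        (Finset.univ.sup' Finset.univ_nonempty fun a' : A =>
          Finset.univ.inf' Finset.univ_nonempty fun b' : B => Q k (s', a', b'))) - Q k x)
        + w k x))
    -- πstar s maximizes a ↦ min_b Qstar (s, a, b)
    (πstar : S → A)
    (hπstar : ∀ s a,
      (Finset.univ.inf' Finset.univ_nonempty fun b : B => Qstar (s, a, b)) ≤
        Finset.univ.inf' Finset.univ_nonempty fun b : B => Qstar (s, πstar s, b))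
    -- the lower comparison system
    (QL : ℕ → S × A × B → ℝ)
    -- ν k (s, a) minimizes b ↦ QL k (s, a, b) - Qstar (s, a, b)
    (ν : ℕ → S × A → B)
    (hν : ∀ k s a b,
      QL k (s, a, ν k (s, a)) - Qstar (s, a, ν k (s, a)) ≤ QL k (s, a, b) - Qstar (s, a, b))
    (hQL : ∀ k (x : S × A × B), QL (k + 1) x - Qstar x =
      (1 - α * d x) * (QL k x - Qstar x)
      + α * d x * γ * (∑ s' : S, P x s' *
          (QL k (s', πstar s', ν k (s', πstar s'))
            - Qstar (s', πstar s', ν k (s', πstar s'))))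
      + α * w k x)
    (h0 : ∀ x, QL 0 x ≤ Q 0 x) :
    ∀ k x, QL k x ≤ Q k x := by
  intro k
  induction k with
  | zero => exact h0
  | succ k ih =>
    intro x
    have hgame : ∀ s', QL k (s', πstar s', ν k (s', πstar s'))
        - Qstar (s', πstar s', ν k (s', πstar s')) ≤ maxMin (Q k) s' - maxMin Qstar s' :=
      fun s' => (sub_le_maxMin_sub_maxMin (hπstar s') (hν k s' (πstar s'))).trans
        (by linarith [maxMin_mono ih s'])
    have havg : ∑ s', P x s' * (QL k (s', πstar s', ν k (s', πstar s'))
          - Qstar (s', πstar s', ν k (s', πstar s')))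
        ≤ ∑ s', P x s' * maxMin (Q k) s' - ∑ s', P x s' * maxMin Qstar s' := by
      rw [← sum_sub_distrib]
      exact sum_le_sum fun s' _ => (mul_le_mul_of_nonneg_left (hgame s') (hP0 x s')).trans_eq
        (mul_sub _ _ _)
    obtain ⟨hα0, hα1⟩ := hα
    obtain ⟨hd0, hd1⟩ := hd x
    exact comparison_update_le (mul_pos hα0 hd0).le (mul_le_one₀ hα1.le hd0.le hd1.le) hγ0 (hQ k x) (hQL k x)
      (hQstar x) havg (ih x)

theorem lower_comparison_system_bounds_q_learning {S A B : Type*}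
    [Fintype S] [Fintype A] [Fintype B] [Nonempty S] [Nonempty A] [Nonempty B]
    (P : S × A × B → S → ℝ) (hP0 : ∀ x s', 0 ≤ P x s') (hP1 : ∀ x, ∑ s' : S, P x s' = 1)
    (R : S × A × B → ℝ) (γ : ℝ) (hγ0 : 0 ≤ γ) (hγ1 : γ < 1)
    (Qstar : S × A × B → ℝ)
    (hQstar : ∀ x : S × A × B, Qstar x = R x + γ * ∑ s' : S, P x s' *
      (Finset.univ.sup' Finset.univ_nonempty fun a' : A =>
        Finset.univ.inf' Finset.univ_nonempty fun b' : B => Qstar (s', a', b')))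
    (α : ℝ) (hα : α ∈ Set.Ioo (0 : ℝ) 1)
    (d : S × A × B → ℝ) (hd : ∀ x, d x ∈ Set.Ioo (0 : ℝ) 1)
    (w : ℕ → S × A × B → ℝ)
    -- the pathwise minimax Q-learning system
    (Q : ℕ → S × A × B → ℝ)
    (hQ : ∀ k (x : S × A × B), Q (k + 1) x = Q k x + α *
      (d x * (R x + γ * (∑ s' : S, P x s' *
        (Finset.univ.sup' Finset.univ_nonempty fun a' : A =>
          Finset.univ.inf' Finset.univ_nonempty fun b' : B => Q k (s', a', b'))) - Q k x)
        + w k x))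
    -- πstar s maximizes a ↦ min_b Qstar (s, a, b)
    (πstar : S → A)
    (hπstar : ∀ s a,
      (Finset.univ.inf' Finset.univ_nonempty fun b : B => Qstar (s, a, b)) ≤
        Finset.univ.inf' Finset.univ_nonempty fun b : B => Qstar (s, πstar s, b))
    -- the lower comparison system
    (QL : ℕ → S × A × B → ℝ)
    -- ν k (s, a) minimizes b ↦ QL k (s, a, b) - Qstar (s, a, b)
    (ν : ℕ → S × A → B)
    (hν : ∀ k s a b,
      QL k (s, a, ν k (s, a)) - Qstar (s, a, ν k (s, a)) ≤ QL k (s, a, b) - Qstar (s, a, b))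
    (hQL : ∀ k (x : S × A × B), QL (k + 1) x - Qstar x =
      (1 - α * d x) * (QL k x - Qstar x)
      + α * d x * γ * (∑ s' : S, P x s' *
          (QL k (s', πstar s', ν k (s', πstar s'))
            - Qstar (s', πstar s', ν k (s', πstar s'))))
      + α * w k x)
    (h0 : ∀ x, QL 0 x ≤ Q 0 x) :
    ∀ k x, QL k x ≤ Q k x :=
  lower_comparison_system_bounds_q_learning_general P hP0 R γ hγ0 Qstar hQstar α hα d hd w Q hQ
    πstar hπstar QL ν hν hQL h0
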